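/- As formal power series in q: Σ_{n1 > n2 > 0} (q^{n1}/(1-q^{n1})^2)·(1/(1-q^{n2})) = Σ_{n>0} q^{2n}/(1-q^n)^3. -/

import Mathlib

open PowerSeries

/-- Sum over positive integers, coefficientwise. -/
noncomputable def psum (f : ℕ → ℚ⟦X⟧) : ℚ⟦X⟧ :=
  PowerSeries.mk fun m => ∑ n ∈ Finset.Icc 1 m, PowerSeries.coeff (R := ℚ) m (f n)

/-- Sum over pairs `n₁ > n₂ > 0`, coefficientwise. -/
noncomputable def psumGT (f : ℕ → ℕ → ℚ⟦X⟧) : ℚ⟦X⟧ :=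
  PowerSeries.mk fun m =>
    ∑ p ∈ (Finset.Icc 1 m ×ˢ Finset.Icc 1 m).filter (fun p => p.2 < p.1),
      PowerSeries.coeff (R := ℚ) m (f p.1 p.2)

/-!
Expanding `1/(1 - q^a) = ∑ q^{a k}`, the coefficient of `q^m` on the left is the sum of `v₁` over
quadruples `(u₁, u₂, v₁, v₂)` with `u₁ > u₂ > 0`, `v₁, v₂ ≥ 0` and `u₁ v₁ + u₂ v₂ = m`, i.e. over
partitions of `m` with `v₁` parts `u₁` and `v₂` parts `u₂`; on the right it is the sum of `v₁` over
the positive quadruples with `u₁ = u₂`. Conjugating partitions (which exchanges the multiplicity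
`v₁` of the largest part with the smallest part `u₂`), transposing `(u₁, u₂, v₁, v₂) ↦
(v₂, v₁, u₂, u₁)` and swapping the two parts are bijections between such sets of quadruples, and
the sums they identify combine linearly into the equality of the two coefficients.
-/

def solutions (a b m : ℕ) : Finset (ℕ × ℕ) :=
  {v ∈ Finset.range (m + 1) ×ˢ Finset.range (m + 1) | a * v.1 + b * v.2 = m}

lemma mem_solutions {a b m : ℕ} {v : ℕ × ℕ} (ha : a ≠ 0) (hb : b ≠ 0) :
    v ∈ solutions a b m ↔ a * v.1 + b * v.2 = m := by
  simp only [solutions, Finset.mem_filter, Finset.mem_product, Finset.mem_range,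
    and_iff_right_iff_imp]
  intro h
  constructor <;> nlinarith [Nat.one_le_iff_ne_zero.2 ha, Nat.one_le_iff_ne_zero.2 hb]

theorem coeff_expand_mul_expand {R : Type*} [CommRing R] {a b : ℕ} (ha : a ≠ 0) (hb : b ≠ 0)
    (f g : R⟦X⟧) (m : ℕ) :
    coeff m (expand a ha f * expand b hb g) =
      ∑ v ∈ solutions a b m, coeff v.1 f * coeff v.2 g := by
  rw [coeff_mul]
  symm
  apply Finset.sum_of_injOn (fun v => (a * v.1, b * v.2))
  · rintro ⟨v₁, v₂⟩ - ⟨w₁, w₂⟩ - h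
    simp only [Prod.mk.injEq] at h
    simp [Nat.eq_of_mul_eq_mul_left (Nat.pos_of_ne_zero ha) h.1,
      Nat.eq_of_mul_eq_mul_left (Nat.pos_of_ne_zero hb) h.2]
  · intro v hv
    simpa [mem_solutions ha hb] using hv
  · rintro ⟨x₁, x₂⟩ hx hx'
    simp only [coeff_expand]
    by_cases h : a ∣ x₁ ∧ b ∣ x₂
    · obtain ⟨⟨v₁, rfl⟩, ⟨v₂, rfl⟩⟩ := h
      rw [Finset.HasAntidiagonal.mem_antidiagonal] at hx
      exact absurd ⟨(v₁, v₂), (mem_solutions ha hb).2 hx, rfl⟩ hx'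
    · rcases not_and_or.1 h with h | h <;> simp [h]
  · intro v _
    simp [coeff_expand, Nat.pos_of_ne_zero ha, Nat.pos_of_ne_zero hb]

theorem inv_one_sub_X_pow {k : Type*} [Field k] {n : ℕ} (hn : n ≠ 0) :
    (1 - X ^ n : k⟦X⟧)⁻¹ = expand n hn (mk 1) := by
  rw [PowerSeries.inv_eq_iff_mul_eq_one (by simp [hn]), ← expand_X n hn, ← map_one (expand n hn),
    ← map_sub, ← map_mul, mk_one_mul_one_sub_eq_one, map_one]

theorem coeff_X_mul_mk_one_sq {R : Type*} [CommRing R] (k : ℕ) :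
    coeff k (X * mk 1 ^ 2 : R⟦X⟧) = k := by
  rcases k with _ | k
  · simp
  · rw [coeff_succ_X_mul, show (2 : ℕ) = 1 + 1 from rfl, mk_one_pow_eq_mk_choose_add, coeff_mk]
    simp [add_comm]

theorem coeff_X_mul_mk_one {R : Type*} [CommRing R] (k : ℕ) :
    coeff k (X * mk 1 : R⟦X⟧) = if k = 0 then 0 else 1 := by
  rcases k with _ | k <;> simp

theorem coeff_X_pow_mul_inv_one_sub_X_pow_sq_mul_inv {k : Type*} [Field k] {a b : ℕ}
    (ha : a ≠ 0) (hb : b ≠ 0) (m : ℕ) :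
    coeff m (X ^ a * ((1 - X ^ a)⁻¹) ^ 2 * (1 - X ^ b)⁻¹ : k⟦X⟧) =
      ((∑ v ∈ solutions a b m, v.1 : ℕ) : k) := by
  have : (X ^ a * ((1 - X ^ a)⁻¹) ^ 2 * (1 - X ^ b)⁻¹ : k⟦X⟧) =
      expand a ha (X * mk 1 ^ 2) * expand b hb (mk 1) := by
    rw [inv_one_sub_X_pow ha, inv_one_sub_X_pow hb, map_mul, map_pow, expand_X]
  rw [this, coeff_expand_mul_expand, Nat.cast_sum]
  simp [coeff_X_mul_mk_one_sq]

theorem coeff_X_pow_two_mul_mul_inv_one_sub_X_pow_cube {k : Type*} [Field k] {n : ℕ}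
    (hn : n ≠ 0) (m : ℕ) :
    coeff m (X ^ (2 * n) * ((1 - X ^ n)⁻¹) ^ 3 : k⟦X⟧) =
      ((∑ v ∈ solutions n n m, if v.2 = 0 then 0 else v.1 : ℕ) : k) := by
  have : (X ^ (2 * n) * ((1 - X ^ n)⁻¹) ^ 3 : k⟦X⟧) =
      expand n hn (X * mk 1 ^ 2) * expand n hn (X * mk 1) := by
    rw [inv_one_sub_X_pow hn, map_mul, map_mul, map_pow, expand_X]
    ring
  rw [this, coeff_expand_mul_expand, Nat.cast_sum]
  simp [coeff_X_mul_mk_one_sq, coeff_X_mul_mk_one, apply_ite]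

section Quadruples

open Finset

def quadSols (m : ℕ) : Finset ((ℕ × ℕ) × (ℕ × ℕ)) :=
  {q ∈ (Icc 1 m ×ˢ Icc 1 m) ×ˢ (range (m + 1) ×ˢ range (m + 1)) |
    q.1.1 * q.2.1 + q.1.2 * q.2.2 = m}

/-- For `u₁ ≥ u₂`, `((u₁, u₂), (v₁, v₂))` describes the partition with `v₁` parts `u₁` and `v₂`
parts `u₂`, and its image describes the conjugate partition. -/
def conjugate (q : (ℕ × ℕ) × (ℕ × ℕ)) : (ℕ × ℕ) × (ℕ × ℕ) :=
  ((q.2.1 + q.2.2, q.2.1), (q.1.2, q.1.1 - q.1.2))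

variable {m : ℕ} {M : Type*} [AddCommMonoid M]

lemma mem_quadSols {u₁ u₂ v₁ v₂ : ℕ} :
    ((u₁, u₂), (v₁, v₂)) ∈ quadSols m ↔
      0 < u₁ ∧ u₁ ≤ m ∧ 0 < u₂ ∧ u₂ ≤ m ∧ u₁ * v₁ + u₂ * v₂ = m := by
  simp only [quadSols, mem_filter, mem_product, mem_Icc, mem_range]
  constructor
  · rintro ⟨⟨⟨⟨h₁, h₂⟩, h₃, h₄⟩, -, -⟩, h⟩
    exact ⟨h₁, h₂, h₃, h₄, h⟩
  · rintro ⟨h₁, h₂, h₃, h₄, h⟩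
    exact ⟨⟨⟨⟨h₁, h₂⟩, h₃, h₄⟩, by nlinarith, by nlinarith⟩, h⟩

lemma sum_quadSols_filter_fst (P : ℕ × ℕ → Prop) [DecidablePred P] (g : ℕ × ℕ → ℕ × ℕ → M) :
    ∑ q ∈ quadSols m with P q.1, g q.1 q.2 =
      ∑ u ∈ Icc 1 m ×ˢ Icc 1 m with P u, ∑ v ∈ solutions u.1 u.2 m, g u v := by
  refine sum_finset_product' _ _ _ fun q => ?_
  simp only [quadSols, solutions, mem_filter, mem_product]
  tauto

lemma sum_quadSols_swap (P : (ℕ × ℕ) × (ℕ × ℕ) → Prop) [DecidablePred P]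
    (f : (ℕ × ℕ) × (ℕ × ℕ) → M) :
    ∑ q ∈ quadSols m with P ((q.1.2, q.1.1), (q.2.2, q.2.1)), f ((q.1.2, q.1.1), (q.2.2, q.2.1)) =
      ∑ q ∈ quadSols m with P q, f q := by
  refine sum_nbij' (fun q => ((q.1.2, q.1.1), (q.2.2, q.2.1)))
    (fun q => ((q.1.2, q.1.1), (q.2.2, q.2.1))) ?_ ?_ (fun _ _ => rfl) (fun _ _ => rfl)
    (fun _ _ => rfl) <;>
  · rintro ⟨⟨u₁, u₂⟩, v₁, v₂⟩ hq
    simp only [mem_filter, mem_quadSols] at hq ⊢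
    obtain ⟨⟨h₁, h₂, h₃, h₄, h⟩, hP⟩ := hq
    exact ⟨⟨h₃, h₄, h₁, h₂, by rw [← h]; ring⟩, hP⟩

lemma sum_quadSols_transpose (f : (ℕ × ℕ) × (ℕ × ℕ) → M) :
    ∑ q ∈ quadSols m with 0 < q.2.1 ∧ 0 < q.2.2, f ((q.2.2, q.2.1), (q.1.2, q.1.1)) =
      ∑ q ∈ quadSols m with 0 < q.2.1 ∧ 0 < q.2.2, f q := by
  refine sum_nbij' (fun q => ((q.2.2, q.2.1), (q.1.2, q.1.1)))
    (fun q => ((q.2.2, q.2.1), (q.1.2, q.1.1))) ?_ ?_ (fun _ _ => rfl) (fun _ _ => rfl)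
    (fun _ _ => rfl) <;>
  · rintro ⟨⟨u₁, u₂⟩, v₁, v₂⟩ hq
    simp only [mem_filter, mem_quadSols] at hq ⊢
    obtain ⟨⟨h₁, h₂, h₃, h₄, h⟩, hv₁, hv₂⟩ := hq
    exact ⟨⟨hv₂, by nlinarith, hv₁, by nlinarith, by rw [← h]; ring⟩, h₃, h₁⟩

lemma conjugate_conjugate {q : (ℕ × ℕ) × (ℕ × ℕ)} (h : q.1.2 ≤ q.1.1) :
    conjugate (conjugate q) = q := by
  obtain ⟨⟨u₁, u₂⟩, v₁, v₂⟩ := q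
  simp only [conjugate, Prod.mk.injEq, and_true, true_and] at h ⊢
  omega

lemma conjugate_mem {q : (ℕ × ℕ) × (ℕ × ℕ)} (hq : q ∈ quadSols m) (h : q.1.2 ≤ q.1.1)
    (hv₁ : 0 < q.2.1) : conjugate q ∈ quadSols m := by
  obtain ⟨⟨u₁, u₂⟩, v₁, v₂⟩ := q
  simp only [conjugate, mem_quadSols] at hq h hv₁ ⊢
  obtain ⟨h₁, h₂, h₃, h₄, hm⟩ := hq
  refine ⟨by omega, by nlinarith, hv₁, by nlinarith, ?_⟩
  zify [h] at hm ⊢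
  linear_combination hm

lemma sum_quadSols_conjugate (f : (ℕ × ℕ) × (ℕ × ℕ) → M) :
    ∑ q ∈ quadSols m with q.1.2 < q.1.1 ∧ 0 < q.2.1, f (conjugate q) =
      ∑ q ∈ quadSols m with q.1.2 ≤ q.1.1 ∧ 0 < q.2.1 ∧ 0 < q.2.2, f q := by
  refine sum_nbij' conjugate conjugate ?_ ?_ ?_ ?_ (fun _ _ => rfl)
  · rintro q hq
    simp only [mem_filter] at hq ⊢
    refine ⟨conjugate_mem hq.1 hq.2.1.le hq.2.2, ?_⟩
    obtain ⟨⟨u₁, u₂⟩, v₁, v₂⟩ := q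
    simp only [conjugate, mem_quadSols] at hq ⊢
    omega
  · rintro q hq
    simp only [mem_filter] at hq ⊢
    refine ⟨conjugate_mem hq.1 hq.2.1 hq.2.2.1, ?_⟩
    obtain ⟨⟨u₁, u₂⟩, v₁, v₂⟩ := q
    simp only [conjugate, mem_quadSols] at hq ⊢
    omega
  · exact fun q hq => conjugate_conjugate (mem_filter.1 hq).2.1.le
  · exact fun q hq => conjugate_conjugate (mem_filter.1 hq).2.1

lemma sum_quadSols_gt_eq_sum_diag (m : ℕ) :
    ∑ q ∈ quadSols m with q.1.2 < q.1.1, q.2.1 =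
      ∑ q ∈ quadSols m with q.1.1 = q.1.2, if q.2.2 = 0 then 0 else q.2.1 := by
  have hA := sum_quadSols_conjugate (m := m) (fun q => q.1.2)
  have hC := sum_quadSols_conjugate (m := m) (fun q => if q.1.2 < q.1.1 then q.2.1 + q.2.2 else 0)
  have hT := sum_quadSols_transpose (m := m) (fun q => q.1.2)
  have hS₁ := sum_quadSols_swap (m := m) (fun q => q.1.2 < q.1.1 ∧ 0 < q.2.1 ∧ 0 < q.2.2)
    (fun q => q.1.1)
  have hS₂ := sum_quadSols_swap (m := m) (fun q => q.1.2 < q.1.1 ∧ 0 < q.2.1 ∧ 0 < q.2.2)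
    (fun q => q.2.2)
  simp only [conjugate, sum_filter] at hA hC hT hS₁ hS₂ ⊢
  -- the pointwise form of the combination `hA - hT - hS₁ + hS₂ - hC`
  have key := sum_congr rfl fun (q : (ℕ × ℕ) × (ℕ × ℕ)) (_ : q ∈ quadSols m) =>
    show (if q.1.2 < q.1.1 then q.2.1 else 0)
        + (if q.1.2 ≤ q.1.1 ∧ 0 < q.2.1 ∧ 0 < q.2.2 then q.1.2 else 0)
        + (if 0 < q.2.1 ∧ 0 < q.2.2 then q.2.1 else 0)
        + (if q.1.1 < q.1.2 ∧ 0 < q.2.2 ∧ 0 < q.2.1 then q.1.2 else 0)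
        + (if q.1.2 < q.1.1 ∧ 0 < q.2.1 ∧ 0 < q.2.2 then q.2.2 else 0)
        + (if q.1.2 < q.1.1 ∧ 0 < q.2.1 then
            if q.2.1 < q.2.1 + q.2.2 then q.1.2 + (q.1.1 - q.1.2) else 0 else 0)
      = (if q.1.1 = q.1.2 then if q.2.2 = 0 then 0 else q.2.1 else 0)
        + (if q.1.2 < q.1.1 ∧ 0 < q.2.1 then q.2.1 else 0)
        + (if 0 < q.2.1 ∧ 0 < q.2.2 then q.1.2 else 0)
        + (if q.1.2 < q.1.1 ∧ 0 < q.2.1 ∧ 0 < q.2.2 then q.1.1 else 0)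
        + (if q.1.1 < q.1.2 ∧ 0 < q.2.2 ∧ 0 < q.2.1 then q.2.1 else 0)
        + (if q.1.2 ≤ q.1.1 ∧ 0 < q.2.1 ∧ 0 < q.2.2 then
            if q.1.2 < q.1.1 then q.2.1 + q.2.2 else 0 else 0) by
      split_ifs <;> omega
  simp only [sum_add_distrib] at key
  linarith

theorem sum_sum_solutions_gt_eq_sum_sum_solutions_diag (m : ℕ) :
    ∑ u ∈ Icc 1 m ×ˢ Icc 1 m with u.2 < u.1, ∑ v ∈ solutions u.1 u.2 m, v.1 =
      ∑ n ∈ Icc 1 m, ∑ v ∈ solutions n n m, if v.2 = 0 then 0 else v.1 := by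
  rw [← sum_quadSols_filter_fst (fun u => u.2 < u.1) (fun _ v => v.1),
    sum_quadSols_gt_eq_sum_diag,
    sum_quadSols_filter_fst (fun u => u.1 = u.2) (fun _ v => if v.2 = 0 then 0 else v.1),
    ← diag_eq_filter, diag, sum_map]
  rfl

end Quadruples

/-- `∑_{n₁ > n₂ > 0} q^{n₁}/((1-q^{n₁})²(1-q^{n₂})) = ∑_{n>0} q^{2n}/(1-q^n)³`. -/
theorem stmt3 :
    psumGT (fun n₁ n₂ => X ^ n₁ * ((1 - X ^ n₁)⁻¹) ^ 2 * (1 - X ^ n₂)⁻¹)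
      = psum (fun n => X ^ (2 * n) * ((1 - X ^ n)⁻¹) ^ 3) := by
  ext m
  simp only [psumGT, psum, coeff_mk]
  rw [Finset.sum_congr rfl fun u hu => coeff_X_pow_mul_inv_one_sub_X_pow_sq_mul_inv
      (by grind) (by grind) m,
    Finset.sum_congr rfl fun n hn => coeff_X_pow_two_mul_mul_inv_one_sub_X_pow_cube
      (by grind) m]
  exact_mod_cast sum_sum_solutions_gt_eq_sum_sum_solutions_diag m
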